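/- arXiv:math-ph/0506023 — 3 statements merged into one kernel-verified Lean document; each statement's English description precedes it below -/
import Mathlib

section
/- Let $\Omega \subset \mathbb{R}^n$ be a compact set of positive Lebesgue measure and let $f(t,x) = \int_\Omega (4\pi t)^{-n/2} e^{-|x-y|^2/(4t)}\,dy$. Let $\tilde\Omega$ be the convex hull of $\Omega$. Then there exists $T > 0$ such that for all $t \ge T$ and all $x \in \tilde\Omega$, the Hessian $D_x^2 f(t,x)$ is negative definite; in particular, $f(t,\cdot)$ is strictly concave on $\tilde\Omega$ for each $t \ge T$. -/
open MeasureTheory Real Finset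
section Heat
variable {n : ℕ}
local notation "E" => EuclideanSpace ℝ (Fin n)


noncomputable def D1 (t c : ℝ) (y x : E) : E →L[ℝ] ℝ :=
  (-(c / (2 * t)) * exp (-‖x - y‖ ^ 2 / (4 * t))) • innerSL ℝ (x - y)

lemma D1_apply (t c : ℝ) (y x v : E) :
    D1 t c y x v = -(c / (2 * t)) * exp (-‖x - y‖ ^ 2 / (4 * t)) * inner ℝ (x - y) v := by
  simp only [D1, ContinuousLinearMap.smul_apply, innerSL_apply_apply, smul_eq_mul]

noncomputable def D2 (t c : ℝ) (y w x : E) : E →L[ℝ] ℝ :=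
  (c * exp (-‖x - y‖ ^ 2 / (4 * t))) •
    (((inner ℝ (x - y) w : ℝ) / (4 * t ^ 2)) • innerSL ℝ (x - y) - (1 / (2 * t)) • innerSL ℝ w)

lemma D2_apply (t c : ℝ) (y w x v : E) :
    D2 t c y w x v = c * exp (-‖x - y‖ ^ 2 / (4 * t)) *
      ((inner ℝ (x - y) w : ℝ) * (inner ℝ (x - y) v : ℝ) / (4 * t ^ 2)
        - (inner ℝ w v : ℝ) / (2 * t)) := by
  simp only [D2, ContinuousLinearMap.smul_apply, ContinuousLinearMap.sub_apply,
    ContinuousLinearMap.coe_smul', Pi.smul_apply, innerSL_apply_apply, smul_eq_mul]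
  ring

lemma hasFDerivAt_kernel (t c : ℝ) (ht : 0 < t) (y x : E) :
    HasFDerivAt (fun x : E => c * exp (-‖x - y‖ ^ 2 / (4 * t))) (D1 t c y x) x := by
  have h0 : HasFDerivAt (fun x : E => x - y) (ContinuousLinearMap.id ℝ E) x :=
    (hasFDerivAt_id x).sub_const y
  have h1 := h0.norm_sq
  have h2 := (h1.const_mul (-(1 / (4 * t)))).exp.const_mul c
  have hfun : (fun x : E => c * exp (-(1 / (4 * t)) * ‖x - y‖ ^ 2))
      = fun x : E => c * exp (-‖x - y‖ ^ 2 / (4 * t)) := by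
    funext x; ring_nf
  rw [hfun] at h2
  refine h2.congr_fderiv (Eq.symm ?_)
  ext v
  simp [D1, ContinuousLinearMap.smul_apply, real_inner_comm]
  ring_nf

lemma hasFDerivAt_D1_apply (t c : ℝ) (ht : 0 < t) (y w x : E) :
    HasFDerivAt (fun x : E => D1 t c y x w) (D2 t c y w x) x := by
  have h0 : HasFDerivAt (fun x : E => x - y) (ContinuousLinearMap.id ℝ E) x :=
    (hasFDerivAt_id x).sub_const y
  have h1 := h0.norm_sq
  have hs := ((h1.const_mul (-(1 / (4 * t)))).exp.const_mul (-(c / (2 * t))))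
  have hsfun : (fun x : E => -(c / (2 * t)) * exp (-(1 / (4 * t)) * ‖x - y‖ ^ 2))
      = fun x : E => -(c / (2 * t)) * exp (-‖x - y‖ ^ 2 / (4 * t)) := by
    funext x; ring_nf
  rw [hsfun] at hs
  have hl : HasFDerivAt (fun x : E => (inner ℝ (x - y) w : ℝ)) (innerSL ℝ w) x := by
    have h := ((innerSL ℝ w : E →L[ℝ] ℝ).hasFDerivAt (x := x)).sub_const (inner ℝ w y : ℝ)
    have hfe : (fun x : E => (inner ℝ (x - y) w : ℝ))
        = fun x : E => (innerSL ℝ w : E →L[ℝ] ℝ) x - (inner ℝ w y : ℝ) := by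
      funext x; rw [real_inner_comm, inner_sub_right]; simp
    rw [hfe]; exact h
  have hmul := hs.fun_mul hl
  have hfun : (fun x : E => -(c / (2 * t)) * exp (-‖x - y‖ ^ 2 / (4 * t)) * (inner ℝ (x - y) w : ℝ))
      = fun x : E => D1 t c y x w := by
    funext x; rw [D1_apply]
  rw [hfun] at hmul
  refine hmul.congr_fderiv (Eq.symm ?_)
  ext v
  simp only [D2, ContinuousLinearMap.smul_apply, ContinuousLinearMap.sub_apply,
    ContinuousLinearMap.add_apply, ContinuousLinearMap.coe_smul', Pi.smul_apply,
    innerSL_apply_apply, smul_eq_mul, ContinuousLinearMap.coe_comp', Function.comp_apply,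
    ContinuousLinearMap.coe_id', id_eq]
  have ht' : t ≠ 0 := ne_of_gt ht
  rw [real_inner_comm v (x - y)]
  field_simp
  ring




lemma cont_kernel (t c : ℝ) (x : E) :
    Continuous fun y : E => c * exp (-‖x - y‖ ^ 2 / (4 * t)) := by fun_prop

lemma contD1 (t c : ℝ) (x : E) : Continuous fun y : E => D1 t c y x := by
  unfold D1
  apply Continuous.fun_smul
  · fun_prop
  · exact (innerSL ℝ).continuous.comp (by fun_prop)

lemma contD1_apply (t c : ℝ) (x w : E) : Continuous fun y : E => D1 t c y x w :=
  (ContinuousLinearMap.apply ℝ ℝ w).continuous.comp (contD1 t c x)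

lemma contD2 (t c : ℝ) (x w : E) : Continuous fun y : E => D2 t c y w x := by
  unfold D2
  apply Continuous.fun_smul
  · fun_prop
  · apply Continuous.sub
    · exact Continuous.fun_smul
        (((continuous_const.sub continuous_id).inner continuous_const).div_const _)
        ((innerSL ℝ).continuous.comp (by fun_prop))
    · fun_prop

lemma exp_kernel_le_one (t : ℝ) (ht : 0 < t) (z : E) : exp (-‖z‖ ^ 2 / (4 * t)) ≤ 1 := by
  rw [exp_le_one_iff]
  exact div_nonpos_of_nonpos_of_nonneg (neg_nonpos.mpr (by positivity)) (by positivity)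

lemma norm_D1_le (t c : ℝ) (ht : 0 < t) (y x : E) :
    ‖D1 t c y x‖ ≤ |c| / (2 * t) * ‖x - y‖ := by
  rw [D1]
  refine le_trans (ContinuousLinearMap.opNorm_smul_le _ _) ?_
  rw [innerSL_apply_norm]
  have he := exp_kernel_le_one t ht (x - y)
  have he' : (0:ℝ) < exp (-‖x - y‖ ^ 2 / (4 * t)) := exp_pos _
  have h1 : ‖-(c / (2 * t)) * exp (-‖x - y‖ ^ 2 / (4 * t))‖ ≤ |c| / (2 * t) := by
    rw [norm_mul, norm_neg]
    calc ‖c / (2 * t)‖ * ‖exp (-‖x - y‖ ^ 2 / (4 * t))‖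
        ≤ ‖c / (2 * t)‖ * 1 := by
          gcongr; rw [Real.norm_eq_abs, abs_of_pos he']; exact he
      _ = |c| / (2 * t) := by
          rw [mul_one, Real.norm_eq_abs, abs_div, abs_of_pos (by linarith : (0:ℝ) < 2 * t)]
  exact mul_le_mul_of_nonneg_right h1 (norm_nonneg _)

lemma norm_D2_le (t c : ℝ) (ht : 0 < t) (y w x : E) :
    ‖D2 t c y w x‖ ≤ |c| * (‖x - y‖ ^ 2 * ‖w‖ / (4 * t ^ 2) + ‖w‖ / (2 * t)) := by
  rw [D2]
  refine le_trans (ContinuousLinearMap.opNorm_smul_le _ _) ?_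
  have he := exp_kernel_le_one t ht (x - y)
  have he' : (0:ℝ) < exp (-‖x - y‖ ^ 2 / (4 * t)) := exp_pos _
  have h1 : ‖c * exp (-‖x - y‖ ^ 2 / (4 * t))‖ ≤ |c| := by
    rw [norm_mul, Real.norm_eq_abs, Real.norm_eq_abs (exp _), abs_of_pos he']
    calc |c| * exp (-‖x - y‖ ^ 2 / (4 * t)) ≤ |c| * 1 := by gcongr
      _ = |c| := mul_one _
  have h2 : ‖((inner ℝ (x - y) w : ℝ) / (4 * t ^ 2)) • innerSL ℝ (x - y)
        - (1 / (2 * t)) • (innerSL ℝ w : E →L[ℝ] ℝ)‖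
      ≤ ‖x - y‖ ^ 2 * ‖w‖ / (4 * t ^ 2) + ‖w‖ / (2 * t) := by
    refine (norm_sub_le _ _).trans ?_
    refine le_trans (add_le_add (ContinuousLinearMap.opNorm_smul_le _ _)
      (ContinuousLinearMap.opNorm_smul_le _ _)) ?_
    rw [innerSL_apply_norm, innerSL_apply_norm]
    gcongr ?_ + ?_
    · rw [Real.norm_eq_abs, abs_div, abs_of_pos (by positivity : (0:ℝ) < 4 * t ^ 2),
        div_mul_eq_mul_div]
      rw [div_le_div_iff_of_pos_right (by positivity : (0:ℝ) < 4 * t ^ 2)]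
      calc |(inner ℝ (x - y) w : ℝ)| * ‖x - y‖ ≤ ‖x - y‖ * ‖w‖ * ‖x - y‖ := by
            gcongr; exact abs_real_inner_le_norm _ _
        _ = ‖x - y‖ ^ 2 * ‖w‖ := by ring
    · rw [Real.norm_eq_abs, abs_of_pos (by positivity : (0:ℝ) < 1 / (2 * t)), one_div,
        div_eq_inv_mul]
  exact mul_le_mul h1 h2 (norm_nonneg _) (abs_nonneg _)




lemma norm_sub_est {x₀ x y : E} (hx : x ∈ Metric.ball x₀ 1) :
    ‖x - y‖ ≤ ‖x₀‖ + 1 + ‖y‖ := by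
  have h1 : ‖x‖ ≤ ‖x₀‖ + 1 := by
    have := mem_ball_iff_norm.mp hx
    calc ‖x‖ = ‖x₀ + (x - x₀)‖ := by congr 1; abel
      _ ≤ ‖x₀‖ + ‖x - x₀‖ := norm_add_le _ _
      _ ≤ ‖x₀‖ + 1 := by linarith
  calc ‖x - y‖ ≤ ‖x‖ + ‖y‖ := norm_sub_le _ _
    _ ≤ ‖x₀‖ + 1 + ‖y‖ := by linarith

lemma hasFDerivAt_int1 (Ω : Set E) (hΩc : IsCompact Ω) (t c : ℝ) (ht : 0 < t) (x₀ : E) :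
    HasFDerivAt (fun x : E => ∫ y in Ω, c * exp (-‖x - y‖ ^ 2 / (4 * t)))
      (∫ y in Ω, D1 t c y x₀) x₀ := by
  apply hasFDerivAt_integral_of_dominated_of_fderiv_le (s := Metric.ball x₀ 1)
    (F' := fun x y => D1 t c y x)
    (bound := fun y => |c| / (2 * t) * (‖x₀‖ + 1 + ‖y‖)) (Metric.ball_mem_nhds x₀ one_pos)
  · exact Filter.Eventually.of_forall fun x =>
      (cont_kernel t c x).aestronglyMeasurable.restrict
  · exact ((cont_kernel t c x₀).continuousOn).integrableOn_compact hΩc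
  · exact (contD1 t c x₀).aestronglyMeasurable.restrict
  · refine Filter.Eventually.of_forall fun y x hx => ?_
    refine (norm_D1_le t c ht y x).trans ?_
    have : (0:ℝ) ≤ |c| / (2 * t) := by positivity
    exact mul_le_mul_of_nonneg_left (norm_sub_est hx) this
  · exact (Continuous.continuousOn (by fun_prop)).integrableOn_compact hΩc
  · exact Filter.Eventually.of_forall fun y x _ => hasFDerivAt_kernel t c ht y x

lemma hasFDerivAt_int2 (Ω : Set E) (hΩc : IsCompact Ω) (t c : ℝ) (ht : 0 < t) (w x₀ : E) :
    HasFDerivAt (fun x : E => ∫ y in Ω, D1 t c y x w)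
      (∫ y in Ω, D2 t c y w x₀) x₀ := by
  apply hasFDerivAt_integral_of_dominated_of_fderiv_le (s := Metric.ball x₀ 1)
    (F' := fun x y => D2 t c y w x)
    (bound := fun y => |c| * ((‖x₀‖ + 1 + ‖y‖) ^ 2 * ‖w‖ / (4 * t ^ 2) + ‖w‖ / (2 * t))) (Metric.ball_mem_nhds x₀ one_pos)
  · exact Filter.Eventually.of_forall fun x =>
      (contD1_apply t c x w).aestronglyMeasurable.restrict
  · exact ((contD1_apply t c x₀ w).continuousOn).integrableOn_compact hΩc
  · exact (contD2 t c x₀ w).aestronglyMeasurable.restrict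
  · refine Filter.Eventually.of_forall fun y x hx => ?_
    refine (norm_D2_le t c ht y w x).trans ?_
    have h := norm_sub_est (y := y) hx
    gcongr
  · exact (Continuous.continuousOn (by fun_prop)).integrableOn_compact hΩc
  · exact Filter.Eventually.of_forall fun y x _ => hasFDerivAt_D1_apply t c ht y w x


lemma quad_sum (k t : ℝ) (z v : E) :
    ∑ i : Fin n, ∑ j : Fin n,
      (k * ((inner ℝ z (EuclideanSpace.single j (1:ℝ)) : ℝ) *
          (inner ℝ z (EuclideanSpace.single i (1:ℝ)) : ℝ) / (4 * t ^ 2)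
        - (inner ℝ (EuclideanSpace.single j (1:ℝ)) (EuclideanSpace.single i (1:ℝ)) : ℝ)
            / (2 * t))) * v i * v j
    = k * ((inner ℝ z v : ℝ) ^ 2 / (4 * t ^ 2) - ‖v‖ ^ 2 / (2 * t)) := by
  have hzv : (inner ℝ z v : ℝ) = ∑ l : Fin n, z l * v l := by
    simp [PiLp.inner_apply, RCLike.inner_apply, mul_comm]
  have hvv : ‖v‖ ^ 2 = ∑ l : Fin n, v l * v l := by
    rw [← real_inner_self_eq_norm_sq]
    simp only [PiLp.inner_apply, RCLike.inner_apply, conj_trivial]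
  have hz : ∀ i : Fin n, (inner ℝ z (EuclideanSpace.single i (1:ℝ)) : ℝ) = z i := by
    intro i; rw [EuclideanSpace.inner_single_right]; simp
  have hss : ∀ i j : Fin n, (inner ℝ (EuclideanSpace.single j (1:ℝ))
      (EuclideanSpace.single i (1:ℝ)) : ℝ) = if j = i then 1 else 0 := by
    intro i j; rw [EuclideanSpace.inner_single_right]; simp [EuclideanSpace.single_apply, eq_comm]
  simp only [hz, hss]
  rw [hzv, hvv]
  set S := ∑ l : Fin n, z l * v l with hS
  set N := ∑ l : Fin n, v l * v l with hN
  have h1 : ∀ i : Fin n,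
      ∑ j : Fin n, (k * (z j * z i / (4 * t ^ 2) - (if j = i then (1:ℝ) else 0) / (2 * t)))
          * v i * v j
      = (k / (4 * t ^ 2)) * ((z i * v i) * S) - (if i ∈ (univ : Finset (Fin n)) then
          (k / (2 * t)) * (v i * v i) else 0) := by
    intro i
    have h2 : ∀ j : Fin n,
        (k * (z j * z i / (4 * t ^ 2) - (if j = i then (1:ℝ) else 0) / (2 * t))) * v i * v j
        = (k / (4 * t ^ 2)) * ((z i * v i) * (z j * v j))
          - (if j = i then (k / (2 * t)) * (v i * v j) else 0) := by
      intro j; by_cases h : j = i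
      · subst h; simp; ring
      · simp only [if_neg h]; ring
    rw [Finset.sum_congr rfl fun j _ => h2 j, Finset.sum_sub_distrib,
      Finset.sum_ite_eq' univ i (fun j => (k / (2 * t)) * (v i * v j)),
      ← Finset.mul_sum, ← Finset.mul_sum]
  rw [Finset.sum_congr rfl fun i _ => h1 i, Finset.sum_sub_distrib]
  simp only [Finset.mem_univ, if_pos]
  rw [← Finset.mul_sum, ← Finset.sum_mul, ← Finset.mul_sum]
  rw [← hS, ← hN]
  field_simp

lemma integral_quad_neg (Ω : Set E) (hΩc : IsCompact Ω) (hΩpos : 0 < volume Ω)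
    (R : ℝ) (hR : Ω ⊆ Metric.closedBall 0 R) (t c : ℝ) (ht : 0 < t) (hc : 0 < c)
    (hT : 4 * R ^ 2 + 1 ≤ t) (x : E) (hx : x ∈ convexHull ℝ Ω) (v : E) (hv : v ≠ 0) :
    ∫ y in Ω, c * exp (-‖x - y‖ ^ 2 / (4 * t)) *
      ((inner ℝ (x - y) v : ℝ) ^ 2 / (4 * t ^ 2) - ‖v‖ ^ 2 / (2 * t)) < 0 := by
  have hxball : x ∈ Metric.closedBall (0 : E) R :=
    convexHull_min hR (convex_closedBall 0 R) hx
  have hxR : ‖x‖ ≤ R := by simpa using hxball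
  have hR0 : 0 ≤ R := le_trans (norm_nonneg x) hxR
  have hvpos : 0 < ‖v‖ := norm_pos_iff.mpr hv
  set e₀ := exp (-(4 * R ^ 2) / (4 * t)) with he₀
  set δ := c * e₀ * ‖v‖ ^ 2 / (4 * t) with hδ
  have hδpos : 0 < δ := by
    have := exp_pos (-(4 * R ^ 2) / (4 * t)); positivity
  have hbound : ∀ y ∈ Ω, c * exp (-‖x - y‖ ^ 2 / (4 * t)) *
      ((inner ℝ (x - y) v : ℝ) ^ 2 / (4 * t ^ 2) - ‖v‖ ^ 2 / (2 * t)) ≤ -δ := by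
    intro y hy
    have hyR : ‖y‖ ≤ R := by simpa using hR hy
    have hxy : ‖x - y‖ ≤ 2 * R := by
      calc ‖x - y‖ ≤ ‖x‖ + ‖y‖ := norm_sub_le _ _
        _ ≤ 2 * R := by linarith
    have hxy2 : ‖x - y‖ ^ 2 ≤ 4 * R ^ 2 := by nlinarith [norm_nonneg (x - y)]
    have hinner : (inner ℝ (x - y) v : ℝ) ^ 2 ≤ 4 * R ^ 2 * ‖v‖ ^ 2 := by
      have h := abs_real_inner_le_norm (x - y) v
      have h2 : (inner ℝ (x - y) v : ℝ) ^ 2 ≤ (‖x - y‖ * ‖v‖) ^ 2 := by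
        rw [← sq_abs]; exact pow_le_pow_left₀ (abs_nonneg _) h 2
      nlinarith [norm_nonneg (x - y), norm_nonneg v]
    have hQ : (inner ℝ (x - y) v : ℝ) ^ 2 / (4 * t ^ 2) - ‖v‖ ^ 2 / (2 * t)
        ≤ -(‖v‖ ^ 2 / (4 * t)) := by
      have h4R : 4 * R ^ 2 ≤ t := by linarith
      have h1 : (inner ℝ (x - y) v : ℝ) ^ 2 / (4 * t ^ 2) ≤ ‖v‖ ^ 2 / (4 * t) := by
        rw [div_le_div_iff₀ (by positivity) (by positivity)]
        calc (inner ℝ (x - y) v : ℝ) ^ 2 * (4 * t) ≤ (4 * R ^ 2 * ‖v‖ ^ 2) * (4 * t) := by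
              gcongr
          _ ≤ (t * ‖v‖ ^ 2) * (4 * t) := by gcongr
          _ = ‖v‖ ^ 2 * (4 * t ^ 2) := by ring
      have h2 : ‖v‖ ^ 2 / (2 * t) = 2 * (‖v‖ ^ 2 / (4 * t)) := by
        field_simp; ring
      linarith
    have hee : e₀ ≤ exp (-‖x - y‖ ^ 2 / (4 * t)) := by
      rw [he₀, exp_le_exp]
      have h4 : (0:ℝ) < 4 * t := by positivity
      rw [div_le_div_iff_of_pos_right h4]
      linarith
    have hepos : (0:ℝ) < exp (-‖x - y‖ ^ 2 / (4 * t)) := exp_pos _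
    have he₀pos : (0:ℝ) < e₀ := exp_pos _
    calc c * exp (-‖x - y‖ ^ 2 / (4 * t)) *
        ((inner ℝ (x - y) v : ℝ) ^ 2 / (4 * t ^ 2) - ‖v‖ ^ 2 / (2 * t))
        ≤ c * exp (-‖x - y‖ ^ 2 / (4 * t)) * (-(‖v‖ ^ 2 / (4 * t))) := by
          apply mul_le_mul_of_nonneg_left hQ (by positivity)
      _ ≤ c * e₀ * (-(‖v‖ ^ 2 / (4 * t))) := by
          have hneg : -(‖v‖ ^ 2 / (4 * t)) ≤ 0 := neg_nonpos.mpr (by positivity)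
          exact mul_le_mul_of_nonpos_right (mul_le_mul_of_nonneg_left hee hc.le) hneg
      _ = -δ := by rw [hδ]; ring
  have hint : IntegrableOn (fun y : E => c * exp (-‖x - y‖ ^ 2 / (4 * t)) *
      ((inner ℝ (x - y) v : ℝ) ^ 2 / (4 * t ^ 2) - ‖v‖ ^ 2 / (2 * t))) Ω := by
    apply Continuous.continuousOn ?_ |>.integrableOn_compact hΩc
    apply Continuous.mul (by fun_prop)
    apply Continuous.sub ?_ continuous_const
    exact (((continuous_const.sub continuous_id).inner continuous_const).pow 2).div_const _
  have hmono : ∫ y in Ω, c * exp (-‖x - y‖ ^ 2 / (4 * t)) *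
      ((inner ℝ (x - y) v : ℝ) ^ 2 / (4 * t ^ 2) - ‖v‖ ^ 2 / (2 * t))
      ≤ ∫ _ in Ω, (-δ) := by
    apply setIntegral_mono_on hint (integrableOn_const hΩc.measure_lt_top.ne)
      hΩc.measurableSet hbound
  have hconst : ∫ _ in Ω, (-δ) = (volume Ω).toReal * (-δ) := by
    rw [setIntegral_const]; simp [smul_eq_mul, Measure.real]
  have hvol : 0 < (volume Ω).toReal :=
    ENNReal.toReal_pos hΩpos.ne' hΩc.measure_lt_top.ne
  calc _ ≤ (volume Ω).toReal * (-δ) := hconst ▸ hmono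
    _ < 0 := by nlinarith

end Heat
section Main
variable {n : ℕ}
local notation "E" => EuclideanSpace ℝ (Fin n)

lemma hessian_rep (Ω : Set E) (hΩc : IsCompact Ω) (t c : ℝ) (ht : 0 < t) (w x : E) :
    fderiv ℝ (fun x' : E =>
        fderiv ℝ (fun x'' : E => ∫ y in Ω, c * exp (-‖x'' - y‖ ^ 2 / (4 * t))) x' w) x
      = ∫ y in Ω, D2 t c y w x := by
  have h1 : (fun x' : E =>
      fderiv ℝ (fun x'' : E => ∫ y in Ω, c * exp (-‖x'' - y‖ ^ 2 / (4 * t))) x' w)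
      = fun x' : E => ∫ y in Ω, D1 t c y x' w := by
    funext x'
    rw [(hasFDerivAt_int1 Ω hΩc t c ht x').fderiv]
    exact ContinuousLinearMap.integral_apply
      ((contD1 t c x').continuousOn.integrableOn_compact hΩc) w
  rw [h1]
  exact (hasFDerivAt_int2 Ω hΩc t c ht w x).fderiv

lemma cont_integrand (t c : ℝ) (x w u : E) (a b : ℝ) :
    Continuous fun y : E => c * exp (-‖x - y‖ ^ 2 / (4 * t)) *
      ((inner ℝ (x - y) w : ℝ) * (inner ℝ (x - y) u : ℝ) / (4 * t ^ 2)
        - (inner ℝ w u : ℝ) / (2 * t)) * a * b := by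
  apply Continuous.mul (Continuous.mul ?_ continuous_const) continuous_const
  apply Continuous.mul (by fun_prop)
  apply Continuous.sub ?_ continuous_const
  exact Continuous.div_const (Continuous.mul
    ((continuous_const.sub continuous_id).inner continuous_const)
    ((continuous_const.sub continuous_id).inner continuous_const)) _

lemma hessian_quadform (Ω : Set E) (hΩc : IsCompact Ω) (t c : ℝ) (ht : 0 < t) (x v : E) :
    (∑ i : Fin n, ∑ j : Fin n,
      (fderiv ℝ (fun x' : E =>
        fderiv ℝ (fun x'' : E => ∫ y in Ω, c * exp (-‖x'' - y‖ ^ 2 / (4 * t))) x'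
          (EuclideanSpace.single j 1)) x (EuclideanSpace.single i 1)) * v i * v j)
    = ∫ y in Ω, c * exp (-‖x - y‖ ^ 2 / (4 * t)) *
        ((inner ℝ (x - y) v : ℝ) ^ 2 / (4 * t ^ 2) - ‖v‖ ^ 2 / (2 * t)) := by
  have hrep : ∀ i j : Fin n,
      (fderiv ℝ (fun x' : E =>
        fderiv ℝ (fun x'' : E => ∫ y in Ω, c * exp (-‖x'' - y‖ ^ 2 / (4 * t))) x'
          (EuclideanSpace.single j 1)) x (EuclideanSpace.single i 1)) * v i * v j
      = ∫ y in Ω, c * exp (-‖x - y‖ ^ 2 / (4 * t)) *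
          ((inner ℝ (x - y) (EuclideanSpace.single j (1:ℝ)) : ℝ) *
            (inner ℝ (x - y) (EuclideanSpace.single i (1:ℝ)) : ℝ) / (4 * t ^ 2)
          - (inner ℝ (EuclideanSpace.single j (1:ℝ)) (EuclideanSpace.single i (1:ℝ)) : ℝ)
              / (2 * t)) * v i * v j := by
    intro i j
    rw [hessian_rep Ω hΩc t c ht (EuclideanSpace.single j 1) x,
      ContinuousLinearMap.integral_apply
        ((contD2 t c x (EuclideanSpace.single j 1)).continuousOn.integrableOn_compact hΩc)
        (EuclideanSpace.single i 1)]
    rw [← integral_mul_const, ← integral_mul_const]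
    congr 1
    funext y
    rw [D2_apply]
  calc (∑ i : Fin n, ∑ j : Fin n, _) = ∑ i : Fin n, ∑ j : Fin n,
      ∫ y in Ω, c * exp (-‖x - y‖ ^ 2 / (4 * t)) *
          ((inner ℝ (x - y) (EuclideanSpace.single j (1:ℝ)) : ℝ) *
            (inner ℝ (x - y) (EuclideanSpace.single i (1:ℝ)) : ℝ) / (4 * t ^ 2)
          - (inner ℝ (EuclideanSpace.single j (1:ℝ)) (EuclideanSpace.single i (1:ℝ)) : ℝ)
              / (2 * t)) * v i * v j :=
      Finset.sum_congr rfl fun i _ => Finset.sum_congr rfl fun j _ => hrep i j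
    _ = ∫ y in Ω, ∑ i : Fin n, ∑ j : Fin n,
        c * exp (-‖x - y‖ ^ 2 / (4 * t)) *
          ((inner ℝ (x - y) (EuclideanSpace.single j (1:ℝ)) : ℝ) *
            (inner ℝ (x - y) (EuclideanSpace.single i (1:ℝ)) : ℝ) / (4 * t ^ 2)
          - (inner ℝ (EuclideanSpace.single j (1:ℝ)) (EuclideanSpace.single i (1:ℝ)) : ℝ)
              / (2 * t)) * v i * v j := by
        rw [integral_finset_sum]
        · refine Finset.sum_congr rfl fun i _ => ?_
          rw [integral_finset_sum]
          intro j _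
          exact ((cont_integrand t c x _ _ (v i) (v j)).continuousOn.integrableOn_compact hΩc)
        · intro i _
          apply integrable_finset_sum
          intro j _
          exact ((cont_integrand t c x _ _ (v i) (v j)).continuousOn.integrableOn_compact hΩc)
    _ = ∫ y in Ω, c * exp (-‖x - y‖ ^ 2 / (4 * t)) *
        ((inner ℝ (x - y) v : ℝ) ^ 2 / (4 * t ^ 2) - ‖v‖ ^ 2 / (2 * t)) := by
        congr 1
        funext y
        exact quad_sum (c * exp (-‖x - y‖ ^ 2 / (4 * t))) t (x - y) v
end Main
/-- For large times, the heat solution with initial datum `χ_Ω` has negative definite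
Hessian on the convex hull of `Ω`; in particular it is strictly concave there. -/
theorem heat_solution_eventually_concave (n : ℕ) (Ω : Set (EuclideanSpace ℝ (Fin n)))
    (hΩc : IsCompact Ω) (hΩpos : 0 < volume Ω) :
    ∃ T > 0, ∀ t : ℝ, T ≤ t →
      (∀ x ∈ convexHull ℝ Ω, ∀ v : EuclideanSpace ℝ (Fin n), v ≠ 0 →
        (∑ i : Fin n, ∑ j : Fin n,
          (fderiv ℝ (fun x' : EuclideanSpace ℝ (Fin n) =>
            fderiv ℝ (fun x'' : EuclideanSpace ℝ (Fin n) =>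
                ∫ y in Ω, (4 * π * t) ^ (-(n : ℝ) / 2) * exp (-‖x'' - y‖ ^ 2 / (4 * t))) x'
              (EuclideanSpace.single j 1)) x (EuclideanSpace.single i 1)) * v i * v j) < 0) ∧
      StrictConcaveOn ℝ (convexHull ℝ Ω)
        (fun x : EuclideanSpace ℝ (Fin n) =>
          ∫ y in Ω, (4 * π * t) ^ (-(n : ℝ) / 2) * exp (-‖x - y‖ ^ 2 / (4 * t))) := by
  obtain ⟨R, hR⟩ := hΩc.isBounded.subset_closedBall 0
  refine ⟨4 * R ^ 2 + 1, by positivity, fun t hT => ?_⟩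
  have ht : 0 < t := lt_of_lt_of_le (by positivity) hT
  set c : ℝ := (4 * π * t) ^ (-(n : ℝ) / 2) with hc
  have hcpos : 0 < c := by
    apply Real.rpow_pos_of_pos
    have := Real.pi_pos
    positivity
  constructor
  · intro x hx v hv
    rw [hessian_quadform Ω hΩc t c ht x v]
    exact integral_quad_neg Ω hΩc hΩpos R hR t c ht hcpos hT x hx v hv
  refine ⟨convex_convexHull ℝ Ω, ?_⟩
  intro p hp q hq hpq a b ha hb hab
  set z := q - p with hzdef
  have hz : z ≠ 0 := sub_ne_zero.mpr (Ne.symm hpq)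
  set γ : ℝ → EuclideanSpace ℝ (Fin n) := fun s => p + s • z with hγdef
  set g : ℝ → ℝ := fun s => ∫ y in Ω, c * exp (-‖γ s - y‖ ^ 2 / (4 * t)) with hgdef
  have hγ : ∀ s : ℝ, HasDerivAt γ z s := by
    intro s
    simpa [hγdef] using ((hasDerivAt_id s).smul_const z).const_add p
  have hasDg : ∀ s : ℝ, HasDerivAt g ((∫ y in Ω, D1 t c y (γ s)) z) s := fun s =>
    (hasFDerivAt_int1 Ω hΩc t c ht (γ s)).comp_hasDerivAt s (hγ s)
  set ψ : ℝ → ℝ := fun s => ∫ y in Ω, D1 t c y (γ s) z with hψdef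
  have hψeq : ∀ s : ℝ, (∫ y in Ω, D1 t c y (γ s)) z = ψ s := fun s =>
    ContinuousLinearMap.integral_apply
      ((contD1 t c (γ s)).continuousOn.integrableOn_compact hΩc) z
  have hderivg : deriv g = ψ := funext fun s => ((hasDg s).deriv).trans (hψeq s)
  have hasDψ : ∀ s : ℝ, HasDerivAt ψ ((∫ y in Ω, D2 t c y z (γ s)) z) s := fun s =>
    (hasFDerivAt_int2 Ω hΩc t c ht z (γ s)).comp_hasDerivAt s (hγ s)
  have hconc : StrictConcaveOn ℝ (Set.Icc (0:ℝ) 1) g := by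
    apply strictConcaveOn_of_deriv2_neg (convex_Icc 0 1)
    · exact fun s _ => ((hasDg s).continuousAt).continuousWithinAt
    · intro s hs
      rw [interior_Icc] at hs
      have hmem : γ s ∈ convexHull ℝ Ω :=
        (convex_convexHull ℝ Ω).add_smul_sub_mem hp hq ⟨hs.1.le, hs.2.le⟩
      have h2 : deriv^[2] g s = (∫ y in Ω, D2 t c y z (γ s)) z := by
        simp only [Function.iterate_succ, Function.iterate_zero, Function.comp_apply, id_eq]
        rw [hderivg]
        exact (hasDψ s).deriv
      rw [h2, ContinuousLinearMap.integral_apply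
        ((contD2 t c (γ s) z).continuousOn.integrableOn_compact hΩc) z]
      have hval : ∫ y in Ω, D2 t c y z (γ s) z
          = ∫ y in Ω, c * exp (-‖γ s - y‖ ^ 2 / (4 * t)) *
            ((inner ℝ (γ s - y) z : ℝ) ^ 2 / (4 * t ^ 2) - ‖z‖ ^ 2 / (2 * t)) := by
        congr 1
        funext y
        rw [D2_apply, real_inner_self_eq_norm_sq, ← sq]
      rw [hval]
      exact integral_quad_neg Ω hΩc hΩpos R hR t c ht hcpos hT (γ s) hmem z hz
  have hg0' : γ 0 = p := by simp [hγdef]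
  have hg1' : γ 1 = q := by simp [hγdef, hzdef]
  have hgb' : γ b = a • p + b • q := by
    rw [hγdef]
    show p + b • z = a • p + b • q
    rw [hzdef, show a = 1 - b by linarith, sub_smul, one_smul, smul_sub]
    abel
  have key : a • g 0 + b • g 1 < g (a • (0:ℝ) + b • 1) :=
    hconc.2 (Set.left_mem_Icc.mpr zero_le_one) (Set.right_mem_Icc.mpr zero_le_one)
      (by norm_num) ha hb hab
  have hb' : a • (0:ℝ) + b • 1 = b := by simp [smul_eq_mul]
  rw [hb'] at key
  simpa only [hgdef, hg0', hg1', hgb'] using key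
end

section
/- Consider the square-shaped dumbbell: for $a, b > 0$ and $0 \le c < a$, define $g(t) = \frac{\int_0^a e^{-y^2/(4t)}\,dy}{\int_c^a e^{-y^2/(4t)}\,dy}\, e^{-(a^2+ab)/t}$ for $t > 0$. Then $g$ is continuous and strictly increasing on $(0,\infty)$, with $\lim_{t\to 0^+} g(t) = 0$ and $\lim_{t\to\infty} g(t) = \frac{a}{a-c}$. Consequently, since $\frac{a}{a-c} > \frac{b}{b+2a}$, there is a unique $t_0 > 0$ with $g(t_0) = \frac{b}{b+2a}$. -/
open Real Filter MeasureTheory intervalIntegral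

/-! Write `F(t) = ∫₀ᵃ e^{-y²/4t} dy` and
`H(t) = e^{a²/t} ∫_cᵃ e^{-y²/4t} dy = ∫_cᵃ e^{(a² - y²/4)/t} dy`, so that
`g(t) = H(t)⁻¹ · F(t) · e^{-ab/t}`. For `y ∈ (0, a)` the exponent `-y²/4` is negative and
`a² - y²/4` is positive, so `F` increases and `H` decreases strictly in `t`: `g` is a product of
three positive strictly increasing functions. Both integrals are continuous functions of `1/t` up
to `1/t = 0`, where they equal the lengths `a` and `a - c`; this gives the limit `a / (a - c)` at
`∞`. Since `F ≤ a` and `H ≥ a - c`, `0 < g(t) ≤ a / (a - c) · e^{-ab/t} → 0` as `t → 0⁺`. The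
intermediate value theorem and strict monotonicity then give the unique `t₀`. -/

open Set Topology

theorem StrictMonoOn.mul_of_nonneg {α β : Type*} [Preorder α] [Semiring β] [PartialOrder β]
    [IsStrictOrderedRing β] {s : Set α} {f g : α → β} (hf : StrictMonoOn f s)
    (hg : StrictMonoOn g s) (hf₀ : ∀ x ∈ s, 0 ≤ f x) (hg₀ : ∀ x ∈ s, 0 ≤ g x) :
    StrictMonoOn (fun x => f x * g x) s :=
  fun _ hx _ hy hxy => mul_lt_mul'' (hf hx hy hxy) (hg hx hy hxy) (hf₀ _ hx) (hg₀ _ hx)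

theorem StrictAntiOn.inv_of_pos {α β : Type*} [Preorder α] [Field β] [LinearOrder β]
    [IsStrictOrderedRing β] {s : Set α} {f : α → β} (hf : StrictAntiOn f s)
    (hf₀ : ∀ x ∈ s, 0 < f x) : StrictMonoOn (fun x => (f x)⁻¹) s :=
  fun _ hx _ hy hxy => (inv_lt_inv₀ (hf₀ _ hx) (hf₀ _ hy)).2 (hf hx hy hxy)

theorem intervalIntegral.integral_lt_integral_of_lt_on_Ioo {f g : ℝ → ℝ} {a b : ℝ} (hab : a < b)
    (hf : IntervalIntegrable f volume a b) (hg : IntervalIntegrable g volume a b)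
    (hlt : ∀ x ∈ Ioo a b, f x < g x) : ∫ x in a..b, f x < ∫ x in a..b, g x := by
  rw [← sub_pos, ← integral_sub hg hf]
  exact intervalIntegral_pos_of_pos_on (hg.sub hf) (fun x hx => sub_pos.2 (hlt x hx)) hab

theorem strictMonoOn_exp_div_of_neg {k : ℝ} (hk : k < 0) :
    StrictMonoOn (fun t => exp (k / t)) (Ioi 0) := fun s hs t _ hst => by
  have := div_lt_div_of_pos_left (neg_pos.2 hk) (mem_Ioi.1 hs) hst
  rw [neg_div, neg_div, neg_lt_neg_iff] at this
  exact exp_lt_exp.2 this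

theorem strictAntiOn_exp_div_of_pos {k : ℝ} (hk : 0 < k) :
    StrictAntiOn (fun t => exp (k / t)) (Ioi 0) := fun _ hs _ _ hst =>
  exp_lt_exp.2 (div_lt_div_of_pos_left hk (mem_Ioi.1 hs) hst)

theorem tendsto_exp_div_atTop (k : ℝ) : Tendsto (fun t => exp (k / t)) atTop (𝓝 1) := by
  simpa only [Function.comp_def, div_eq_mul_inv, mul_zero, exp_zero] using
    ((continuous_exp.comp (continuous_const_mul k)).tendsto 0).comp tendsto_inv_atTop_zero

theorem tendsto_exp_div_nhdsGT_zero {k : ℝ} (hk : k < 0) :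
    Tendsto (fun t => exp (k / t)) (𝓝[>] 0) (𝓝 0) := by
  simpa only [Function.comp_def, div_eq_mul_inv] using
    tendsto_exp_atBot.comp ((tendsto_const_mul_atBot_of_neg hk).2 tendsto_inv_nhdsGT_zero)

theorem existsUnique_eq_of_strictMonoOn_Ioi {f : ℝ → ℝ} {x₀ l₀ l₁ r : ℝ}
    (hf : ContinuousOn f (Ioi x₀)) (hmono : StrictMonoOn f (Ioi x₀))
    (h₀ : Tendsto f (𝓝[>] x₀) (𝓝 l₀)) (h₁ : Tendsto f atTop (𝓝 l₁)) (hr : r ∈ Ioo l₀ l₁) :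
    ∃! x, x₀ < x ∧ f x = r := by
  obtain ⟨x, hx, hfx⟩ := isPreconnected_Ioi.intermediate_value_Ioo (l₁ := 𝓝[>] x₀) inf_le_right
    (le_principal_iff.2 (Ioi_mem_atTop x₀)) hf h₀ h₁ hr
  exact ⟨x, ⟨hx, hfx⟩, fun y ⟨hy, hfy⟩ => hmono.injOn hy hx (hfy.trans hfx.symm)⟩

noncomputable def expIntegral (φ : ℝ → ℝ) (p q t : ℝ) : ℝ := ∫ y in p..q, exp (φ y / t)

section expIntegral

variable {φ : ℝ → ℝ} {p q t : ℝ}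

theorem intervalIntegrable_exp_div (hφ : Continuous φ) (p q t : ℝ) :
    IntervalIntegrable (fun y => exp (φ y / t)) volume p q :=
  (continuous_exp.comp (hφ.div_const t)).intervalIntegrable p q

theorem expIntegral_pos (hφ : Continuous φ) (hpq : p < q) : 0 < expIntegral φ p q t :=
  intervalIntegral_pos_of_pos (intervalIntegrable_exp_div hφ p q t) (fun _ => exp_pos _) hpq

theorem expIntegral_mul_exp_div (φ : ℝ → ℝ) (p q t k : ℝ) :
    expIntegral φ p q t * exp (k / t) = expIntegral (fun y => φ y + k) p q t := by
  rw [expIntegral, ← intervalIntegral.integral_mul_const]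
  simp only [expIntegral, ← exp_add, add_div]

theorem continuous_integral_exp_mul (hφ : Continuous φ) (p q : ℝ) :
    Continuous fun s => ∫ y in p..q, exp (φ y * s) :=
  continuous_parametric_intervalIntegral_of_continuous' (f := fun s y => exp (φ y * s))
    (by fun_prop) p q

theorem expIntegral_eq_integral_exp_mul_inv (φ : ℝ → ℝ) (p q : ℝ) :
    expIntegral φ p q = fun t => ∫ y in p..q, exp (φ y * t⁻¹) := by
  funext t
  simp only [expIntegral, div_eq_mul_inv]

theorem continuousOn_expIntegral (hφ : Continuous φ) (p q : ℝ) :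
    ContinuousOn (expIntegral φ p q) (Ioi 0) := by
  rw [expIntegral_eq_integral_exp_mul_inv]
  exact (continuous_integral_exp_mul hφ p q).comp_continuousOn
    (continuousOn_inv₀.mono fun _ ht => (mem_Ioi.1 ht).ne')

theorem tendsto_expIntegral_atTop (hφ : Continuous φ) (p q : ℝ) :
    Tendsto (expIntegral φ p q) atTop (𝓝 (q - p)) := by
  have h := ((continuous_integral_exp_mul hφ p q).tendsto 0).comp tendsto_inv_atTop_zero
  simpa only [expIntegral_eq_integral_exp_mul_inv, Function.comp_def, mul_zero, exp_zero,
    intervalIntegral.integral_const, smul_eq_mul, mul_one] using h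

theorem expIntegral_le_sub (hφ : Continuous φ) (hpq : p ≤ q) (ht : 0 ≤ t)
    (hnonpos : ∀ y ∈ Icc p q, φ y ≤ 0) : expIntegral φ p q t ≤ q - p := by
  simpa [expIntegral] using integral_mono_on (g := fun _ => (1 : ℝ)) hpq
    (intervalIntegrable_exp_div hφ p q t) intervalIntegrable_const
    fun y hy => exp_le_one_iff.2 (div_nonpos_of_nonpos_of_nonneg (hnonpos y hy) ht)

theorem sub_le_expIntegral (hφ : Continuous φ) (hpq : p ≤ q) (ht : 0 ≤ t)
    (hnonneg : ∀ y ∈ Icc p q, 0 ≤ φ y) : q - p ≤ expIntegral φ p q t := by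
  simpa [expIntegral] using integral_mono_on (f := fun _ => (1 : ℝ)) hpq intervalIntegrable_const
    (intervalIntegrable_exp_div hφ p q t) fun y hy => one_le_exp (div_nonneg (hnonneg y hy) ht)

theorem strictMonoOn_expIntegral (hφ : Continuous φ) (hpq : p < q)
    (hneg : ∀ y ∈ Ioo p q, φ y < 0) : StrictMonoOn (expIntegral φ p q) (Ioi 0) :=
  fun _ hs _ ht hst => integral_lt_integral_of_lt_on_Ioo hpq (intervalIntegrable_exp_div hφ p q _)
    (intervalIntegrable_exp_div hφ p q _)
    fun y hy => strictMonoOn_exp_div_of_neg (hneg y hy) hs ht hst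

theorem strictAntiOn_expIntegral (hφ : Continuous φ) (hpq : p < q)
    (hpos : ∀ y ∈ Ioo p q, 0 < φ y) : StrictAntiOn (expIntegral φ p q) (Ioi 0) :=
  fun _ hs _ ht hst => integral_lt_integral_of_lt_on_Ioo hpq (intervalIntegrable_exp_div hφ p q _)
    (intervalIntegrable_exp_div hφ p q _)
    fun y hy => strictAntiOn_exp_div_of_pos (hpos y hy) hs ht hst

end expIntegral

noncomputable def dumbbellG (a b c t : ℝ) : ℝ :=
  (expIntegral (fun y => -y ^ 2 / 4 + a ^ 2) c a t)⁻¹ * expIntegral (fun y => -y ^ 2 / 4) 0 a t *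
    exp (-(a * b) / t)

section dumbbellG

variable {a b c : ℝ}

theorem dumbbellG_eq (a b c t : ℝ) :
    (∫ y in (0:ℝ)..a, exp (-y ^ 2 / (4 * t))) / (∫ y in c..a, exp (-y ^ 2 / (4 * t))) *
      exp (-(a ^ 2 + a * b) / t) = dumbbellG a b c t := by
  have hsplit : exp (-(a ^ 2 + a * b) / t) = (exp (a ^ 2 / t))⁻¹ * exp (-(a * b) / t) := by
    rw [← exp_neg, ← exp_add]
    ring_nf
  have hgauss (p : ℝ) :
      ∫ y in p..a, exp (-y ^ 2 / (4 * t)) = expIntegral (fun y => -y ^ 2 / 4) p a t := by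
    simp only [expIntegral, div_div]
  rw [dumbbellG, ← expIntegral_mul_exp_div, hgauss, hgauss, hsplit, mul_inv]
  ring

theorem continuousOn_dumbbellG (hca : c < a) : ContinuousOn (dumbbellG a b c) (Ioi 0) := by
  refine (((continuousOn_expIntegral (by fun_prop) c a).inv₀ fun t _ => ?_).mul
    (continuousOn_expIntegral (by fun_prop) 0 a)).mul ?_
  · exact (expIntegral_pos (by fun_prop) hca).ne'
  · exact continuous_exp.comp_continuousOn
      (continuousOn_const.div continuousOn_id fun t ht => (mem_Ioi.1 ht).ne')

theorem strictMonoOn_dumbbellG (ha : 0 < a) (hb : 0 < b) (hc : 0 ≤ c) (hca : c < a) :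
    StrictMonoOn (dumbbellG a b c) (Ioi 0) := by
  have hHpos (t : ℝ) : 0 < expIntegral (fun y => -y ^ 2 / 4 + a ^ 2) c a t :=
    expIntegral_pos (by fun_prop) hca
  have hFpos (t : ℝ) : 0 < expIntegral (fun y => -y ^ 2 / 4) 0 a t :=
    expIntegral_pos (by fun_prop) ha
  have hH : StrictAntiOn (expIntegral (fun y => -y ^ 2 / 4 + a ^ 2) c a) (Ioi 0) :=
    strictAntiOn_expIntegral (by fun_prop) hca fun y hy => by nlinarith [hy.1, hy.2]
  have hF : StrictMonoOn (expIntegral (fun y => -y ^ 2 / 4) 0 a) (Ioi 0) :=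
    strictMonoOn_expIntegral (by fun_prop) ha fun y hy => by nlinarith [hy.1]
  have hE : StrictMonoOn (fun t => exp (-(a * b) / t)) (Ioi 0) :=
    strictMonoOn_exp_div_of_neg (neg_lt_zero.2 (mul_pos ha hb))
  exact ((hH.inv_of_pos fun t _ => hHpos t).mul_of_nonneg hF
    (fun t _ => (inv_pos.2 (hHpos t)).le) fun t _ => (hFpos t).le).mul_of_nonneg hE
    (fun t _ => (mul_pos (inv_pos.2 (hHpos t)) (hFpos t)).le) fun t _ => (exp_pos _).le

theorem dumbbellG_pos (ha : 0 < a) (hca : c < a) (t : ℝ) : 0 < dumbbellG a b c t :=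
  mul_pos (mul_pos (inv_pos.2 (expIntegral_pos (by fun_prop) hca))
    (expIntegral_pos (by fun_prop) ha)) (exp_pos _)

theorem tendsto_dumbbellG_nhdsGT_zero (ha : 0 < a) (hb : 0 < b) (hc : 0 ≤ c) (hca : c < a) :
    Tendsto (dumbbellG a b c) (𝓝[>] 0) (𝓝 0) := by
  have hbound : ∀ t ∈ Ioi (0 : ℝ), dumbbellG a b c t ≤ (a - c)⁻¹ * a * exp (-(a * b) / t) := by
    intro t ht
    have hH : a - c ≤ expIntegral (fun y => -y ^ 2 / 4 + a ^ 2) c a t :=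
      sub_le_expIntegral (by fun_prop) hca.le (mem_Ioi.1 ht).le fun y hy => by
        nlinarith [hy.1, hy.2]
    have hF : expIntegral (fun y => -y ^ 2 / 4) 0 a t ≤ a := by
      simpa using expIntegral_le_sub (by fun_prop) ha.le (mem_Ioi.1 ht).le fun y _ => by nlinarith
    unfold dumbbellG
    gcongr
    exact (expIntegral_pos (by fun_prop) ha).le
  have hlim := (tendsto_exp_div_nhdsGT_zero (neg_lt_zero.2 (mul_pos ha hb))).const_mul
    ((a - c)⁻¹ * a)
  rw [mul_zero] at hlim
  exact squeeze_zero' (Eventually.of_forall fun t => (dumbbellG_pos ha hca t).le)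
    (eventually_nhdsWithin_of_forall hbound) hlim

theorem tendsto_dumbbellG_atTop (hca : c < a) :
    Tendsto (dumbbellG a b c) atTop (𝓝 (a / (a - c))) := by
  have h : Tendsto (dumbbellG a b c) atTop (𝓝 ((a - c)⁻¹ * (a - 0) * 1)) :=
    (((tendsto_expIntegral_atTop (by fun_prop) c a).inv₀ (sub_pos.2 hca).ne').mul
      (tendsto_expIntegral_atTop (by fun_prop) 0 a)).mul (tendsto_exp_div_atTop (-(a * b)))
  simpa only [sub_zero, mul_one, div_eq_inv_mul] using h

end dumbbellG

/-- Properties of the function `g` governing the square dumbbell: continuity,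
strict monotonicity, limits at `0⁺` and `∞`, and the unique collapse time `t₀`. -/
theorem square_dumbbell_g (a b c : ℝ) (ha : 0 < a) (hb : 0 < b) (hc : 0 ≤ c) (hca : c < a)
    (g : ℝ → ℝ)
    (hg : ∀ t : ℝ, 0 < t →
      g t = (∫ y in (0:ℝ)..a, exp (-y ^ 2 / (4 * t))) /
            (∫ y in c..a, exp (-y ^ 2 / (4 * t))) * exp (-(a ^ 2 + a * b) / t)) :
    ContinuousOn g (Set.Ioi 0) ∧ StrictMonoOn g (Set.Ioi 0) ∧
    Tendsto g (nhdsWithin 0 (Set.Ioi 0)) (nhds 0) ∧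
    Tendsto g atTop (nhds (a / (a - c))) ∧
    b / (b + 2 * a) < a / (a - c) ∧
    (∃! t₀ : ℝ, 0 < t₀ ∧ g t₀ = b / (b + 2 * a)) := by
  have hEq : EqOn g (dumbbellG a b c) (Ioi 0) := fun t ht =>
    (hg t ht).trans (dumbbellG_eq a b c t)
  have hcont : ContinuousOn g (Ioi 0) := (continuousOn_dumbbellG hca).congr hEq
  have hmono : StrictMonoOn g (Ioi 0) := (strictMonoOn_dumbbellG ha hb hc hca).congr hEq.symm
  have hlim₀ : Tendsto g (𝓝[>] 0) (𝓝 0) :=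
    (tendsto_dumbbellG_nhdsGT_zero ha hb hc hca).congr'
      (eventuallyEq_nhdsWithin_of_eqOn hEq).symm
  have hlim : Tendsto g atTop (𝓝 (a / (a - c))) :=
    (tendsto_dumbbellG_atTop hca).congr' <|
      (eventually_gt_atTop 0).mono fun t ht => (hEq (mem_Ioi.2 ht)).symm
  have hlt : b / (b + 2 * a) < a / (a - c) :=
    calc b / (b + 2 * a) < 1 := (div_lt_one (by positivity)).2 (by linarith)
      _ ≤ a / (a - c) := (one_le_div (sub_pos.2 hca)).2 (by linarith)
  exact ⟨hcont, hmono, hlim₀, hlim, hlt,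
    existsUnique_eq_of_strictMonoOn_Ioi hcont hmono hlim₀ hlim ⟨by positivity, hlt⟩⟩
end

section
/- Let $c : \mathbb{R} \to \mathbb{R}^3$ be a smooth unit-speed curve with Frenet frame $(f_1, f_2, f_3)$, curvature $\kappa > 0$ and torsion $\tau$. Fix $t_0$, $\alpha \in [0,2\pi)$, $R \in (0, 1/\kappa(t_0))$, set $g_1 = f_1(t_0)$, $g_2 = \cos\alpha\, f_2(t_0) + \sin\alpha\, f_3(t_0)$. Suppose $c_\alpha(t) = c(t) + R(\cos\alpha(t) f_2(t) + \sin\alpha(t) f_3(t))$ is a smooth curve with $\alpha(t_0) = \alpha$, lying in the plane $c(t_0) + \mathbb{R}g_1 + \mathbb{R}g_2$ for $t$ near $t_0$. Then $\dot\alpha(t_0) = -\tau(t_0)$ and $\dot c_\alpha(t_0) = (1 - R\kappa(t_0)\cos\alpha)\, g_1$. -/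
open Real

/-- Derivative of the distance-`R` curve of a space curve in direction `α`:
`α̇(t₀) = -τ(t₀)` and `ċ_α(t₀) = (1 - Rκ(t₀)cos α₀) g₁`. -/
theorem distance_curve_derivative
    (c f₁ f₂ f₃ : ℝ → EuclideanSpace ℝ (Fin 3)) (κ τ : ℝ → ℝ) (α : ℝ → ℝ)
    (cα : ℝ → EuclideanSpace ℝ (Fin 3)) (t₀ α₀ R : ℝ)
    (hc : ContDiff ℝ (⊤ : ℕ∞) c) (hf₁ : ContDiff ℝ (⊤ : ℕ∞) f₁) (hf₂ : ContDiff ℝ (⊤ : ℕ∞) f₂)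
    (hf₃ : ContDiff ℝ (⊤ : ℕ∞) f₃) (hκ : Continuous κ) (hτ : Continuous τ)
    (hα : ContDiff ℝ (⊤ : ℕ∞) α)
    -- orthonormal Frenet frame
    (hone : ∀ t, ‖f₁ t‖ = 1 ∧ ‖f₂ t‖ = 1 ∧ ‖f₃ t‖ = 1)
    (horth : ∀ t, (inner ℝ (f₁ t) (f₂ t) : ℝ) = 0 ∧ (inner ℝ (f₁ t) (f₃ t) : ℝ) = 0 ∧
      (inner ℝ (f₂ t) (f₃ t) : ℝ) = 0)
    -- unit speed and Frenet equations
    (hspeed : ∀ t, deriv c t = f₁ t)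
    (hfren₁ : ∀ t, deriv f₁ t = κ t • f₂ t)
    (hfren₂ : ∀ t, deriv f₂ t = -κ t • f₁ t + τ t • f₃ t)
    (hfren₃ : ∀ t, deriv f₃ t = -τ t • f₂ t)
    (hκpos : 0 < κ t₀) (hR : R ∈ Set.Ioo 0 (1 / κ t₀))
    (hα₀ : α t₀ = α₀)
    -- the distance R curve in direction α
    (hcα : ∀ t, cα t = c t + R • (Real.cos (α t) • f₂ t + Real.sin (α t) • f₃ t))
    -- cα lies in the plane through c(t₀) spanned by g₁ = f₁(t₀) and
    -- g₂ = cos α₀ f₂(t₀) + sin α₀ f₃(t₀), for t near t₀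
    (hplane : ∀ᶠ t in nhds t₀, ∃ s u : ℝ,
      cα t = c t₀ + s • f₁ t₀ + u • (Real.cos α₀ • f₂ t₀ + Real.sin α₀ • f₃ t₀)) :
    deriv α t₀ = -τ t₀ ∧
    deriv cα t₀ = (1 - R * κ t₀ * Real.cos α₀) • f₁ t₀ := by
  subst hα₀
  set D := deriv α t₀ with hD
  set k := κ t₀ with hk
  set T := τ t₀ with hT
  set ca := Real.cos (α t₀) with hca
  set sa := Real.sin (α t₀) with hsa
  set e₁ := f₁ t₀ with he₁
  set e₂ := f₂ t₀ with he₂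
  set e₃ := f₃ t₀ with he₃
  set g₂ := ca • e₂ + sa • e₃ with hg₂
  -- basic derivatives
  have hαd : HasDerivAt α D t₀ := ((hα.differentiable (by simp)) t₀).hasDerivAt
  have hcd : HasDerivAt c e₁ t₀ := by
    have := ((hc.differentiable (by simp)) t₀).hasDerivAt
    rwa [hspeed t₀] at this
  have hf₂d : HasDerivAt f₂ (-k • e₁ + T • e₃) t₀ := by
    have := ((hf₂.differentiable (by simp)) t₀).hasDerivAt
    rwa [hfren₂ t₀] at this
  have hf₃d : HasDerivAt f₃ (-T • e₂) t₀ := by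
    have := ((hf₃.differentiable (by simp)) t₀).hasDerivAt
    rwa [hfren₃ t₀] at this
  have hcos : HasDerivAt (fun t => Real.cos (α t)) (-sa * D) t₀ := by
    simpa [hsa, Function.comp_def] using (Real.hasDerivAt_cos (α t₀)).comp t₀ hαd
  have hsin : HasDerivAt (fun t => Real.sin (α t)) (ca * D) t₀ := by
    simpa [hca, Function.comp_def] using (Real.hasDerivAt_sin (α t₀)).comp t₀ hαd
  have hV : HasDerivAt cα ((1 - R * k * ca) • e₁ + (-(R * (D + T) * sa)) • e₂
      + (R * (D + T) * ca) • e₃) t₀ := by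
    have hfun : cα = fun t => c t + R • (Real.cos (α t) • f₂ t + Real.sin (α t) • f₃ t) :=
      funext hcα
    rw [hfun]
    have h := hcd.add (((hcos.smul hf₂d).add (hsin.smul hf₃d)).const_smul R)
    refine h.congr_deriv ?_
    simp only [hca, hsa, he₂, he₃]
    module
  -- the derivative lies in the span of e₁ and g₂
  set S := Submodule.span ℝ ({e₁, g₂} : Set (EuclideanSpace ℝ (Fin 3))) with hS
  have he₁S : e₁ ∈ S := Submodule.subset_span (by simp)
  have hg₂S : g₂ ∈ S := Submodule.subset_span (by simp)
  obtain ⟨s₀, u₀, h₀⟩ := hplane.self_of_nhds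
  have hVS : ((1 - R * k * ca) • e₁ + (-(R * (D + T) * sa)) • e₂
      + (R * (D + T) * ca) • e₃) ∈ S := by
    have hcl : IsClosed (S : Set (EuclideanSpace ℝ (Fin 3))) :=
      S.closed_of_finiteDimensional
    refine hcl.mem_of_tendsto (hasDerivAt_iff_tendsto_slope.mp hV) ?_
    filter_upwards [nhdsWithin_le_nhds hplane] with t ht
    obtain ⟨s, u, hsu⟩ := ht
    have hdiff : cα t - cα t₀ = (s - s₀) • e₁ + (u - u₀) • g₂ := by
      rw [hsu, h₀]; module
    rw [slope_def_module, hdiff]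
    exact S.smul_mem _ (S.add_mem (S.smul_mem _ he₁S) (S.smul_mem _ hg₂S))
  obtain ⟨a, b, hab⟩ := Submodule.mem_span_pair.mp hVS
  -- inner product facts
  obtain ⟨h11, h22, h33⟩ := hone t₀
  obtain ⟨h12, h13, h23⟩ := horth t₀
  have i11 : (inner ℝ e₁ e₁ : ℝ) = 1 := by
    rw [real_inner_self_eq_norm_sq, h11]; norm_num
  have i22 : (inner ℝ e₂ e₂ : ℝ) = 1 := by
    rw [real_inner_self_eq_norm_sq, h22]; norm_num
  have i33 : (inner ℝ e₃ e₃ : ℝ) = 1 := by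
    rw [real_inner_self_eq_norm_sq, h33]; norm_num
  have i21 : (inner ℝ e₂ e₁ : ℝ) = 0 := by rw [real_inner_comm]; exact h12
  have i31 : (inner ℝ e₃ e₁ : ℝ) = 0 := by rw [real_inner_comm]; exact h13
  have i32 : (inner ℝ e₃ e₂ : ℝ) = 0 := by rw [real_inner_comm]; exact h23
  -- coefficient equations
  have E1 : a = 1 - R * k * ca := by
    have h := congrArg (fun x => (inner ℝ x e₁ : ℝ)) hab
    simp only [hg₂, inner_add_left, real_inner_smul_left, i11, i21, i31,
      mul_one, mul_zero, add_zero, zero_add] at h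
    linarith
  have E2 : b * ca = -(R * (D + T) * sa) := by
    have h := congrArg (fun x => (inner ℝ x e₂ : ℝ)) hab
    simp only [hg₂, inner_add_left, real_inner_smul_left, i22, i32, (h12 : inner ℝ e₁ e₂ = 0),
      mul_one, mul_zero, add_zero, zero_add] at h
    linear_combination h - inner ℝ e₁ e₂ * E1
  have E3 : b * sa = R * (D + T) * ca := by
    have h := congrArg (fun x => (inner ℝ x e₃ : ℝ)) hab
    simp only [hg₂, inner_add_left, real_inner_smul_left, i33, (h13 : inner ℝ e₁ e₃ = 0), (h23 : inner ℝ e₂ e₃ = 0),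
      mul_one, mul_zero, add_zero, zero_add] at h
    linear_combination h - inner ℝ e₁ e₃ * E1 - inner ℝ e₂ e₃ * E2
  have hsc : sa ^ 2 + ca ^ 2 = 1 := Real.sin_sq_add_cos_sq (α t₀)
  have hRDT : R * (D + T) = 0 := by
    have h1 : ca * (b * sa) - sa * (b * ca) = 0 := by ring
    rw [E3, E2] at h1
    linear_combination h1 - R * (D + T) * hsc
  have hDT : D + T = 0 := by
    have hR0 : R ≠ 0 := ne_of_gt hR.1
    exact (mul_eq_zero.mp hRDT).resolve_left hR0
  refine ⟨by linarith, ?_⟩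
  rw [hV.deriv, hDT]
  simp
end
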